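/- Consider a triple of generators (v_{ij}, v_{ji}, v_{pq}) of kQ̄_n with p, q ∉ {i,j} and p ≠ q. Then the quasi-Poisson property {{v_{ij},v_{ji},v_{pq}}} = {{v_{ij},v_{ji},v_{pq}}}_qP holds if and only if the condition in the applicable case below is satisfied: (i) when i < p < j < q or q < i < p < j: either κ_p^{(j,i)} = 0, or both μ^{(p)}_{jq} − β^{(p)}_{qj} = 0 and ν^{(p)}_{jq} = 0; (ii) when i < q < j < p or p < i < q < j: either κ_q^{(j,i)} = 0, or both μ^{(q)}_{pj} + α^{(q)}_{pj} = 0 and ν^{(q)}_{pj} = 0; (iii) when i < p, q < j with p ≠ q: κ_q^{(j,i)} (μ^{(q)}_{pj} + α^{(q)}_{pj}) = 0, κ_p^{(j,i)} (μ^{(p)}_{jq} − β^{(p)}_{qj}) = 0, and κ_p^{(j,i)} ν^{(p)}_{jq} − κ_q^{(j,i)} ν^{(q)}_{pj} = 0. -/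

import Mathlib

open TensorProduct

namespace NCQP

variable (𝕜 : Type) [Field 𝕜] [CharZero 𝕜]

/-- A double bracket on a `𝕜`-algebra `A`: a bilinear map `A × A → A ⊗ A` satisfying
cyclic antisymmetry and the Leibniz rule in its second argument (for the outer bimodule
structure on `A ⊗ A`). -/
structure DoubleBracket (A : Type) [Ring A] [Algebra 𝕜 A] where
  br : A →ₗ[𝕜] A →ₗ[𝕜] A ⊗[𝕜] A
  cyclic : ∀ a b : A, br b a = - (TensorProduct.comm 𝕜 A A) (br a b)
  leibniz : ∀ a b c : A,
    br a (b * c) = br a b * ((1 : A) ⊗ₜ[𝕜] c) + ((b : A) ⊗ₜ[𝕜] (1 : A)) * br a c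

variable {𝕜}
variable {A : Type} [Ring A] [Algebra 𝕜 A]

/-- The permutation `τ_(132)` on `A ⊗ A ⊗ A`, sending `a ⊗ b ⊗ c` to `b ⊗ c ⊗ a`. -/
noncomputable def tau132 (𝕜 : Type) [Field 𝕜] (A : Type) [Ring A] [Algebra 𝕜 A] :
    (A ⊗[𝕜] (A ⊗[𝕜] A)) ≃ₗ[𝕜] (A ⊗[𝕜] (A ⊗[𝕜] A)) :=
  (TensorProduct.comm 𝕜 A (A ⊗[𝕜] A)).trans (TensorProduct.assoc 𝕜 A A A)

/-- The permutation `τ_(123)` on `A ⊗ A ⊗ A`, sending `a ⊗ b ⊗ c` to `c ⊗ a ⊗ b`. -/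
noncomputable def tau123 (𝕜 : Type) [Field 𝕜] (A : Type) [Ring A] [Algebra 𝕜 A] :
    (A ⊗[𝕜] (A ⊗[𝕜] A)) ≃ₗ[𝕜] (A ⊗[𝕜] (A ⊗[𝕜] A)) :=
  (tau132 𝕜 A).trans (tau132 𝕜 A)

/-- Extension of a linear map `φ : A → A ⊗ A` to `A ⊗ A → A ⊗ A ⊗ A` acting on the
left factor: `b ⊗ c ↦ φ(b) ⊗ c`. -/
noncomputable def extL (𝕜 : Type) [Field 𝕜] (A : Type) [Ring A] [Algebra 𝕜 A]
    (φ : A →ₗ[𝕜] A ⊗[𝕜] A) : A ⊗[𝕜] A →ₗ[𝕜] A ⊗[𝕜] (A ⊗[𝕜] A) :=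
  (TensorProduct.assoc 𝕜 A A A).toLinearMap.comp (LinearMap.rTensor A φ)

/-- The triple bracket `{{a,b,c}}` associated with a double bracket. -/
noncomputable def tripleBr (D : DoubleBracket 𝕜 A) (a b c : A) : A ⊗[𝕜] (A ⊗[𝕜] A) :=
  extL 𝕜 A (D.br a) (D.br b c) + tau123 𝕜 A (extL 𝕜 A (D.br b) (D.br c a))
    + tau132 𝕜 A (extL 𝕜 A (D.br c) (D.br a b))

/-- The quasi-Poisson trivector term `{{a,b,c}}_qP` associated with a family of
orthogonal idempotents `e`. -/
noncomputable def tripleQP {I : Type} [Fintype I] (e : I → A) (a b c : A) :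
    A ⊗[𝕜] (A ⊗[𝕜] A) :=
  (4 : 𝕜)⁻¹ • ∑ s : I,
    ( (c * e s * a) ⊗ₜ[𝕜] ((e s * b) ⊗ₜ[𝕜] (e s))
    - (c * e s * a) ⊗ₜ[𝕜] ((e s) ⊗ₜ[𝕜] (b * e s))
    - (c * e s) ⊗ₜ[𝕜] ((a * e s * b) ⊗ₜ[𝕜] (e s))
    + (c * e s) ⊗ₜ[𝕜] ((a * e s) ⊗ₜ[𝕜] (b * e s))
    - (e s * a) ⊗ₜ[𝕜] ((e s * b) ⊗ₜ[𝕜] (e s * c))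
    + (e s * a) ⊗ₜ[𝕜] ((e s) ⊗ₜ[𝕜] (b * e s * c))
    + (e s) ⊗ₜ[𝕜] ((a * e s * b) ⊗ₜ[𝕜] (e s * c))
    - (e s) ⊗ₜ[𝕜] ((a * e s) ⊗ₜ[𝕜] (b * e s * c)) )

variable (𝕜)

/-- Generators of the path algebra of the quiver `Q̄_n`: one idempotent `E i` per vertex
and one arrow `V i j : j → i` for each ordered pair of distinct vertices. -/
inductive QGen (n : ℕ) : Type
  | E : Fin n → QGen n
  | V : Fin n → Fin n → QGen n

/-- The defining relations of the path algebra of `Q̄_n`. -/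
inductive QRel (n : ℕ) : FreeAlgebra 𝕜 (QGen n) → FreeAlgebra 𝕜 (QGen n) → Prop
  | orth (i j : Fin n) :
      QRel n (FreeAlgebra.ι 𝕜 (QGen.E i) * FreeAlgebra.ι 𝕜 (QGen.E j))
        (if i = j then FreeAlgebra.ι 𝕜 (QGen.E i) else 0)
  | sum_one :
      QRel n (∑ i : Fin n, FreeAlgebra.ι 𝕜 (QGen.E i)) 1
  | supp (i j : Fin n) :
      QRel n (FreeAlgebra.ι 𝕜 (QGen.V i j))
        (FreeAlgebra.ι 𝕜 (QGen.E i) * FreeAlgebra.ι 𝕜 (QGen.V i j) *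
          FreeAlgebra.ι 𝕜 (QGen.E j))
  | diag (i : Fin n) :
      QRel n (FreeAlgebra.ι 𝕜 (QGen.V i i)) 0

/-- The path algebra `𝕜 Q̄_n` of the double of an ordering of the complete `n`-partite
graph on `n` vertices. -/
abbrev PathAlg (n : ℕ) : Type := RingQuot (QRel 𝕜 n)

/-- The vertex idempotents `e i` of `𝕜 Q̄_n`. -/
noncomputable def pe (n : ℕ) (i : Fin n) : PathAlg 𝕜 n :=
  RingQuot.mkAlgHom 𝕜 (QRel 𝕜 n) (FreeAlgebra.ι 𝕜 (QGen.E i))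

/-- The arrows `v i j : j → i` of `𝕜 Q̄_n`. -/
noncomputable def pv (n : ℕ) (i j : Fin n) : PathAlg 𝕜 n :=
  RingQuot.mkAlgHom 𝕜 (QRel 𝕜 n) (FreeAlgebra.ι 𝕜 (QGen.V i j))

/-- The data of coefficient matrices `α, β, μ, ν` and scalars `κ`, together with a
`B`-linear double bracket on the path algebra `𝕜 Q̄_n` whose values on the generators
are given by the formulas (vv0)–(vvopp); `α s i j` stands for `α^{(s)}_{ij}` and
`κ i a j` stands for `κ_a^{(i,j)}`. -/
structure BracketData (n : ℕ) where
  α : Fin n → Fin n → Fin n → 𝕜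
  β : Fin n → Fin n → Fin n → 𝕜
  μ : Fin n → Fin n → Fin n → 𝕜
  ν : Fin n → Fin n → Fin n → 𝕜
  κ : Fin n → Fin n → Fin n → 𝕜
  D : DoubleBracket 𝕜 (PathAlg 𝕜 n)
  hα_skew : ∀ s i j, α s i j = - α s j i
  hα_row : ∀ s j, α s s j = 0
  hα_col : ∀ s j, α s j s = 0
  hβ_skew : ∀ s i j, β s i j = - β s j i
  hβ_row : ∀ s j, β s s j = 0
  hβ_col : ∀ s j, β s j s = 0
  hμ_diag : ∀ s i, μ s i i = 0
  hμ_row : ∀ s j, μ s s j = 0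
  hμ_col : ∀ s j, μ s j s = 0
  hν_diag : ∀ s i, ν s i i = 0
  hν_row : ∀ s j, ν s s j = 0
  hν_col : ∀ s j, ν s j s = 0
  hκ : ∀ i a j, ¬ (j < a ∧ a < i) → κ i a j = 0
  /-- the bracket vanishes on the idempotents, i.e. it is `B`-linear -/
  hB : ∀ s, D.br (pe 𝕜 n s) = 0
  hvv : ∀ i j, D.br (pv 𝕜 n i j) (pv 𝕜 n i j) = 0
  hdisj : ∀ i j p q, i ≠ p → i ≠ q → j ≠ p → j ≠ q →
    D.br (pv 𝕜 n i j) (pv 𝕜 n p q) = 0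
  hbr_α : ∀ i j l, i ≠ j → l ≠ j →
    D.br (pv 𝕜 n i j) (pv 𝕜 n l j) = α j i l • (pv 𝕜 n l j ⊗ₜ[𝕜] pv 𝕜 n i j)
  hbr_β : ∀ i j l, j ≠ i → l ≠ i →
    D.br (pv 𝕜 n i j) (pv 𝕜 n i l) = β i j l • (pv 𝕜 n i j ⊗ₜ[𝕜] pv 𝕜 n i l)
  hbr_μν : ∀ i j l, i ≠ j → l ≠ j → i ≠ l →
    D.br (pv 𝕜 n i j) (pv 𝕜 n j l) =
      μ j i l • (pe 𝕜 n j ⊗ₜ[𝕜] (pv 𝕜 n i j * pv 𝕜 n j l))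
      + ν j i l • (pe 𝕜 n j ⊗ₜ[𝕜] pv 𝕜 n i l)
  hbr_μν' : ∀ i j l, i ≠ j → l ≠ i → l ≠ j →
    D.br (pv 𝕜 n i j) (pv 𝕜 n l i) =
      - (μ i l j • ((pv 𝕜 n l i * pv 𝕜 n i j) ⊗ₜ[𝕜] pe 𝕜 n i))
      - ν i l j • (pv 𝕜 n l j ⊗ₜ[𝕜] pe 𝕜 n i)
  hbr_loop : ∀ i j, i ≠ j →
    D.br (pv 𝕜 n i j) (pv 𝕜 n j i) =
      (if j < i then (1 : 𝕜) else -1) •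
        ( pe 𝕜 n j ⊗ₜ[𝕜] pe 𝕜 n i
          + (2 : 𝕜)⁻¹ • ((pv 𝕜 n j i * pv 𝕜 n i j) ⊗ₜ[𝕜] pe 𝕜 n i)
          + (2 : 𝕜)⁻¹ • (pe 𝕜 n j ⊗ₜ[𝕜] (pv 𝕜 n i j * pv 𝕜 n j i)) )
      + ∑ a : Fin n, κ i a j • (pe 𝕜 n j ⊗ₜ[𝕜] (pv 𝕜 n i a * pv 𝕜 n a i))
      - ∑ b : Fin n, κ j b i • ((pv 𝕜 n j b * pv 𝕜 n b j) ⊗ₜ[𝕜] pe 𝕜 n i)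



set_option linter.unusedSectionVars false

section PathAlgLemmas
variable {𝕜 : Type} [Field 𝕜] [CharZero 𝕜] {n : ℕ}

lemma pe_mul_pe (s t : Fin n) :
    pe 𝕜 n s * pe 𝕜 n t = if s = t then pe 𝕜 n s else 0 := by
  have h := RingQuot.mkAlgHom_rel 𝕜 (QRel.orth (𝕜 := 𝕜) s t)
  simp only [map_mul] at h
  unfold pe
  rw [h]
  split
  · rfl
  · simp

lemma pv_supp (a b : Fin n) :
    pv 𝕜 n a b = pe 𝕜 n a * pv 𝕜 n a b * pe 𝕜 n b := by
  have h := RingQuot.mkAlgHom_rel 𝕜 (QRel.supp (𝕜 := 𝕜) a b)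
  simp only [map_mul] at h
  exact h

lemma pe_mul_pv (s a b : Fin n) :
    pe 𝕜 n s * pv 𝕜 n a b = if s = a then pv 𝕜 n a b else 0 := by
  rw [pv_supp a b, ← mul_assoc, ← mul_assoc, pe_mul_pe]
  split
  · next h => subst h; rw [← pv_supp]
  · simp

lemma pv_mul_pe (a b s : Fin n) :
    pv 𝕜 n a b * pe 𝕜 n s = if b = s then pv 𝕜 n a b else 0 := by
  rw [pv_supp a b, mul_assoc, mul_assoc, pe_mul_pe]
  split
  · rw [← mul_assoc, ← pv_supp]
  · simp

lemma pv_mul_pv_zero (a b c d : Fin n) (h : b ≠ c) :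
    pv 𝕜 n a b * pv 𝕜 n c d = 0 := by
  conv_lhs => rw [pv_supp a b, pv_supp c d]
  have h0 : pe 𝕜 n b * pe 𝕜 n c = 0 := by rw [pe_mul_pe]; simp [h]
  simp only [mul_assoc]
  rw [← mul_assoc (pe 𝕜 n b) (pe 𝕜 n c), h0]
  simp

end PathAlgLemmas

section Rep
variable (𝕜 : Type) [Field 𝕜] [CharZero 𝕜] (n : ℕ)

/-- representation of the path algebra by matrices over polynomials -/
noncomputable def repg : QGen n → Matrix (Fin n) (Fin n) (MvPolynomial (Fin n × Fin n) 𝕜)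
  | QGen.E i => Matrix.single i i 1
  | QGen.V i j => if i = j then 0 else Matrix.single i j (MvPolynomial.X (i, j))

noncomputable def rep0 : FreeAlgebra 𝕜 (QGen n) →ₐ[𝕜] Matrix (Fin n) (Fin n) (MvPolynomial (Fin n × Fin n) 𝕜) :=
  FreeAlgebra.lift 𝕜 (repg 𝕜 n)

lemma rep0_rel : ∀ ⦃x y : FreeAlgebra 𝕜 (QGen n)⦄, QRel 𝕜 n x y → rep0 𝕜 n x = rep0 𝕜 n y := by
  intro x y h
  induction h with
  | orth i j =>
      simp only [map_mul, rep0, FreeAlgebra.lift_ι_apply, repg]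
      rcases eq_or_ne i j with h | h
      · subst h; simp [Matrix.single_mul_single_same, repg]
      · simp [h, Matrix.single_mul_single_of_ne (h := h)]
  | sum_one =>
      simp only [map_sum, map_one, rep0, FreeAlgebra.lift_ι_apply, repg]
      ext a b
      rw [Matrix.sum_apply]
      simp only [Matrix.single, Matrix.one_apply, Matrix.of_apply]
      rcases eq_or_ne a b with h | h
      · subst h
        rw [if_pos rfl, Finset.sum_eq_single a]
        · simp
        · intro x _ hx; simp [hx]
        · simp
      · rw [if_neg h, Finset.sum_eq_zero]
        intro x _
        by_cases hx : x = a
        · subst hx; simp [h]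
        · simp [hx]
  | supp i j =>
      simp only [map_mul, rep0, FreeAlgebra.lift_ι_apply, repg]
      rcases eq_or_ne i j with h | h
      · subst h; simp
      · simp only [if_neg h]
        rw [Matrix.single_mul_single_same, Matrix.single_mul_single_same]
        simp
  | diag i =>
      simp [rep0, FreeAlgebra.lift_ι_apply, repg]

noncomputable def rep : PathAlg 𝕜 n →ₐ[𝕜] Matrix (Fin n) (Fin n) (MvPolynomial (Fin n × Fin n) 𝕜) :=
  RingQuot.liftAlgHom 𝕜 ⟨rep0 𝕜 n, rep0_rel 𝕜 n⟩

lemma rep_pe (i : Fin n) : rep 𝕜 n (pe 𝕜 n i) = Matrix.single i i 1 := by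
  unfold rep pe
  rw [RingQuot.liftAlgHom_mkAlgHom_apply]
  simp [rep0, FreeAlgebra.lift_ι_apply, repg]

lemma rep_pv {i j : Fin n} (h : i ≠ j) :
    rep 𝕜 n (pv 𝕜 n i j) = Matrix.single i j (MvPolynomial.X (i, j)) := by
  unfold rep pv
  rw [RingQuot.liftAlgHom_mkAlgHom_apply]
  simp [rep0, FreeAlgebra.lift_ι_apply, repg, h]

/-- linear functional: coefficient of monomial `m` in entry `(a,b)` of the representation -/
noncomputable def lf (a b : Fin n) (m : (Fin n × Fin n) →₀ ℕ) : PathAlg 𝕜 n →ₗ[𝕜] 𝕜 where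
  toFun x := MvPolynomial.coeff m (rep 𝕜 n x a b)
  map_add' x y := by simp [Matrix.add_apply, MvPolynomial.coeff_add]
  map_smul' r x := by
    show MvPolynomial.coeff m (rep 𝕜 n (r • x) a b) = _
    rw [map_smul]
    simp [Matrix.smul_apply, MvPolynomial.coeff_smul, smul_eq_mul]

/-- trilinear functional on the triple tensor product -/
noncomputable def tf (f g h : PathAlg 𝕜 n →ₗ[𝕜] 𝕜) :
    (PathAlg 𝕜 n ⊗[𝕜] (PathAlg 𝕜 n ⊗[𝕜] PathAlg 𝕜 n)) →ₗ[𝕜] 𝕜 :=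
  (TensorProduct.lid 𝕜 𝕜).toLinearMap ∘ₗ
    TensorProduct.map f ((TensorProduct.lid 𝕜 𝕜).toLinearMap ∘ₗ TensorProduct.map g h)

lemma tf_tmul (f g h : PathAlg 𝕜 n →ₗ[𝕜] 𝕜) (x y z : PathAlg 𝕜 n) :
    tf 𝕜 n f g h (x ⊗ₜ[𝕜] (y ⊗ₜ[𝕜] z)) = f x * (g y * h z) := by
  simp [tf, TensorProduct.map_tmul, TensorProduct.lid_tmul, smul_eq_mul]

end Rep

section Indep
variable {𝕜 : Type} [Field 𝕜] [CharZero 𝕜] {n : ℕ}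

lemma single_ne_addsingle {σ : Type*} (u a b : σ) :
    (Finsupp.single u 1 : σ →₀ ℕ) ≠ Finsupp.single a 1 + Finsupp.single b 1 := by
  intro h
  have := congrArg (fun f : σ →₀ ℕ => f.sum fun _ v => v) h
  rw [Finsupp.sum_single_index rfl,
    Finsupp.sum_add_index' (fun _ => rfl) (fun _ _ _ => rfl),
    Finsupp.sum_single_index rfl, Finsupp.sum_single_index rfl] at this
  omega

lemma XX_eq {σ : Type*} (a b : σ) :
    (MvPolynomial.X a * MvPolynomial.X b : MvPolynomial σ 𝕜)
      = MvPolynomial.monomial (Finsupp.single a 1 + Finsupp.single b 1) 1 := by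
  rw [MvPolynomial.X, MvPolynomial.X, MvPolynomial.monomial_mul, mul_one]

lemma coeff_single_XX {σ : Type*} [DecidableEq σ] (u a b : σ) :
    MvPolynomial.coeff (Finsupp.single u 1) (MvPolynomial.X a * MvPolynomial.X b : MvPolynomial σ 𝕜) = 0 := by
  rw [XX_eq, MvPolynomial.coeff_monomial, if_neg]
  exact fun h => single_ne_addsingle u a b h.symm

lemma coeff_addsingle_X {σ : Type*} [DecidableEq σ] (a b u : σ) :
    MvPolynomial.coeff (Finsupp.single a 1 + Finsupp.single b 1) (MvPolynomial.X u : MvPolynomial σ 𝕜) = 0 := by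
  rw [MvPolynomial.coeff_X', if_neg]
  exact single_ne_addsingle u a b

lemma coeff_XX_self {σ : Type*} [DecidableEq σ] (a b : σ) :
    MvPolynomial.coeff (Finsupp.single a 1 + Finsupp.single b 1)
      (MvPolynomial.X a * MvPolynomial.X b : MvPolynomial σ 𝕜) = 1 := by
  rw [XX_eq, MvPolynomial.coeff_monomial, if_pos rfl]

lemma lf_pe_self (a : Fin n) :
    lf 𝕜 n a a 0 (pe 𝕜 n a) = 1 := by
  simp [lf, rep_pe, Matrix.single_apply_same]

lemma lf_pv (a b : Fin n) (hab : a ≠ b) (m : (Fin n × Fin n) →₀ ℕ) :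
    lf 𝕜 n a b m (pv 𝕜 n a b) = MvPolynomial.coeff m (MvPolynomial.X (a, b)) := by
  simp [lf, rep_pv 𝕜 n hab, Matrix.single_apply_same]

lemma lf_pvpv (a c b : Fin n) (hac : a ≠ c) (hcb : c ≠ b) (m : (Fin n × Fin n) →₀ ℕ) :
    lf 𝕜 n a b m (pv 𝕜 n a c * pv 𝕜 n c b)
      = MvPolynomial.coeff m (MvPolynomial.X ((a, c) : Fin n × Fin n) * MvPolynomial.X (c, b)) := by
  simp only [lf, LinearMap.coe_mk, AddHom.coe_mk, map_mul, rep_pv 𝕜 n hac, rep_pv 𝕜 n hcb,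
    Matrix.single_mul_single_same]
  rw [Matrix.single_apply_same]

/-- The key linear-independence lemma. -/
lemma indep3 {i j p q : Fin n}
    (hij : i ≠ j) (hpq : p ≠ q) (hpi : p ≠ i) (hpj : p ≠ j) (hqi : q ≠ i) (hqj : q ≠ j)
    (C1 C2 C3 : 𝕜)
    (h : C1 • (pv 𝕜 n p j ⊗ₜ[𝕜] (pe 𝕜 n i ⊗ₜ[𝕜] (pv 𝕜 n j p * pv 𝕜 n p q)))
       + C2 • (pv 𝕜 n p j ⊗ₜ[𝕜] (pe 𝕜 n i ⊗ₜ[𝕜] pv 𝕜 n j q))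
       + C3 • ((pv 𝕜 n p q * pv 𝕜 n q j) ⊗ₜ[𝕜] (pe 𝕜 n i ⊗ₜ[𝕜] pv 𝕜 n j q)) = 0) :
    C1 = 0 ∧ C2 = 0 ∧ C3 = 0 := by
  have jp : j ≠ p := hpj.symm
  have jq : j ≠ q := hqj.symm
  have key : ∀ (f g k : PathAlg 𝕜 n →ₗ[𝕜] 𝕜),
      C1 * (f (pv 𝕜 n p j) * (g (pe 𝕜 n i) * k (pv 𝕜 n j p * pv 𝕜 n p q)))
      + C2 * (f (pv 𝕜 n p j) * (g (pe 𝕜 n i) * k (pv 𝕜 n j q)))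
      + C3 * (f (pv 𝕜 n p q * pv 𝕜 n q j) * (g (pe 𝕜 n i) * k (pv 𝕜 n j q))) = 0 := by
    intro f g k
    have := congrArg (tf 𝕜 n f g k) h
    simpa only [map_add, map_smul, tf_tmul, LinearMap.map_zero, smul_eq_mul] using this
  refine ⟨?_, ?_, ?_⟩
  · have := key (lf 𝕜 n p j (Finsupp.single (p, j) 1)) (lf 𝕜 n i i 0)
      (lf 𝕜 n j q (Finsupp.single (j, p) 1 + Finsupp.single (p, q) 1))
    rw [lf_pe_self, lf_pv _ _ hpj, lf_pv _ _ jq, lf_pvpv _ _ _ jp hpq,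
      lf_pvpv _ _ _ hpq hqj] at this
    rw [MvPolynomial.coeff_X_same, coeff_XX_self, coeff_addsingle_X, coeff_single_XX] at this
    simpa using this
  · have := key (lf 𝕜 n p j (Finsupp.single (p, j) 1)) (lf 𝕜 n i i 0)
      (lf 𝕜 n j q (Finsupp.single (j, q) 1))
    rw [lf_pe_self, lf_pv _ _ hpj, lf_pv _ _ jq, lf_pvpv _ _ _ jp hpq,
      lf_pvpv _ _ _ hpq hqj] at this
    rw [MvPolynomial.coeff_X_same, MvPolynomial.coeff_X_same, coeff_single_XX, coeff_single_XX] at this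
    simpa using this
  · have := key (lf 𝕜 n p j (Finsupp.single (p, q) 1 + Finsupp.single (q, j) 1)) (lf 𝕜 n i i 0)
      (lf 𝕜 n j q (Finsupp.single (j, q) 1))
    rw [lf_pe_self, lf_pv _ _ hpj, lf_pv _ _ jq, lf_pvpv _ _ _ jp hpq,
      lf_pvpv _ _ _ hpq hqj] at this
    rw [MvPolynomial.coeff_X_same, coeff_XX_self, coeff_addsingle_X, coeff_single_XX] at this
    simpa using this

end Indep

set_option maxHeartbeats 1000000
set_option synthInstance.maxHeartbeats 400000

section Bracket
variable {𝕜 : Type} [Field 𝕜] [CharZero 𝕜] {n : ℕ}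

lemma extL_tmul (φ : PathAlg 𝕜 n →ₗ[𝕜] PathAlg 𝕜 n ⊗[𝕜] PathAlg 𝕜 n)
    (x y : PathAlg 𝕜 n) :
    extL 𝕜 (PathAlg 𝕜 n) φ (x ⊗ₜ[𝕜] y) = (TensorProduct.assoc 𝕜 _ _ _) ((φ x) ⊗ₜ[𝕜] y) := by
  simp [extL, LinearMap.rTensor_tmul]

lemma tau132_tmul (x y z : PathAlg 𝕜 n) :
    tau132 𝕜 (PathAlg 𝕜 n) (x ⊗ₜ[𝕜] (y ⊗ₜ[𝕜] z)) = y ⊗ₜ[𝕜] (z ⊗ₜ[𝕜] x) := by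
  simp [tau132, TensorProduct.comm_tmul, TensorProduct.assoc_tmul]

variable (S : BracketData 𝕜 n) (i j p q : Fin n)

lemma br_pe_right (s : Fin n) (x : PathAlg 𝕜 n) : S.D.br x (pe 𝕜 n s) = 0 := by
  rw [S.D.cyclic, S.hB]
  simp

variable (hij : i ≠ j) (hpq : p ≠ q) (hpi : p ≠ i) (hpj : p ≠ j) (hqi : q ≠ i) (hqj : q ≠ j)

include hpq hpi hpj hqi hqj

include hij in
lemma br_c_loopsq : S.D.br (pv 𝕜 n p q) (pv 𝕜 n j i * pv 𝕜 n i j) = 0 := by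
  rw [S.D.leibniz, S.hdisj p q j i hpj hpi hqj hqi,
    S.hdisj p q i j hpi hpj hqi hqj]
  simp

lemma br_c_sq_other (b : Fin n) (hbp : b ≠ p) (hbq : b ≠ q) :
    S.D.br (pv 𝕜 n p q) (pv 𝕜 n j b * pv 𝕜 n b j) = 0 := by
  rw [S.D.leibniz, S.hdisj p q j b hpj hbp.symm hqj hbq.symm,
    S.hdisj p q b j hbp.symm hpj hbq.symm hqj]
  simp

lemma br_c_sq_p :
    S.D.br (pv 𝕜 n p q) (pv 𝕜 n j p * pv 𝕜 n p j) =
      (S.β p q j - S.μ p j q) • ((pv 𝕜 n j p * pv 𝕜 n p q) ⊗ₜ[𝕜] pv 𝕜 n p j)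
      - S.ν p j q • (pv 𝕜 n j q ⊗ₜ[𝕜] pv 𝕜 n p j) := by
  rw [S.D.leibniz, S.hbr_μν' p q j hpq hpj.symm hqj.symm, S.hbr_β p q j hpq.symm hpj.symm]
  have hp : pe 𝕜 n p * pv 𝕜 n p j = pv 𝕜 n p j := by rw [pe_mul_pv, if_pos rfl]
  rw [sub_mul, neg_mul]
  rw [smul_mul_assoc, smul_mul_assoc, mul_smul_comm]
  rw [Algebra.TensorProduct.tmul_mul_tmul, Algebra.TensorProduct.tmul_mul_tmul,
    Algebra.TensorProduct.tmul_mul_tmul]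
  rw [mul_one, mul_one, one_mul, hp]
  rw [sub_smul (S.β p q j) (S.μ p j q) ((pv 𝕜 n j p * pv 𝕜 n p q) ⊗ₜ[𝕜] pv 𝕜 n p j)]
  abel

lemma br_c_sq_q :
    S.D.br (pv 𝕜 n p q) (pv 𝕜 n j q * pv 𝕜 n q j) =
      (S.α q p j + S.μ q p j) • (pv 𝕜 n j q ⊗ₜ[𝕜] (pv 𝕜 n p q * pv 𝕜 n q j))
      + S.ν q p j • (pv 𝕜 n j q ⊗ₜ[𝕜] pv 𝕜 n p j) := by
  rw [S.D.leibniz, S.hbr_α p q j hpq hqj.symm, S.hbr_μν p q j hpq hqj.symm hpj]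
  have hq : pv 𝕜 n j q * pe 𝕜 n q = pv 𝕜 n j q := by rw [pv_mul_pe, if_pos rfl]
  rw [smul_mul_assoc, mul_add, mul_smul_comm, mul_smul_comm]
  rw [Algebra.TensorProduct.tmul_mul_tmul, Algebra.TensorProduct.tmul_mul_tmul,
    Algebra.TensorProduct.tmul_mul_tmul]
  simp only [mul_one, one_mul]
  rw [hq, add_smul]
  abel

include hij in
/-- The triple bracket computed explicitly. -/
lemma tripleBr_eq :
    tripleBr S.D (pv 𝕜 n i j) (pv 𝕜 n j i) (pv 𝕜 n p q)
      = (S.κ j p i * (S.μ p j q - S.β p q j)) •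
          (pv 𝕜 n p j ⊗ₜ[𝕜] (pe 𝕜 n i ⊗ₜ[𝕜] (pv 𝕜 n j p * pv 𝕜 n p q)))
        + (S.κ j p i * S.ν p j q - S.κ j q i * S.ν q p j) •
          (pv 𝕜 n p j ⊗ₜ[𝕜] (pe 𝕜 n i ⊗ₜ[𝕜] pv 𝕜 n j q))
        + (-(S.κ j q i * (S.α q p j + S.μ q p j))) •
          ((pv 𝕜 n p q * pv 𝕜 n q j) ⊗ₜ[𝕜] (pe 𝕜 n i ⊗ₜ[𝕜] pv 𝕜 n j q)) := by
  unfold tripleBr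
  rw [S.hdisj j i p q hpj.symm hqj.symm hpi.symm hqi.symm,
    S.hdisj p q i j hpi hpj hqi hqj]
  simp only [LinearMap.map_zero, map_zero, zero_add, add_zero]
  rw [S.hbr_loop i j hij]
  have hA : extL 𝕜 (PathAlg 𝕜 n) (S.D.br (pv 𝕜 n p q))
      ((if j < i then (1:𝕜) else -1) •
        ( pe 𝕜 n j ⊗ₜ[𝕜] pe 𝕜 n i
          + (2 : 𝕜)⁻¹ • ((pv 𝕜 n j i * pv 𝕜 n i j) ⊗ₜ[𝕜] pe 𝕜 n i)
          + (2 : 𝕜)⁻¹ • (pe 𝕜 n j ⊗ₜ[𝕜] (pv 𝕜 n i j * pv 𝕜 n j i)) )) = 0 := by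
    rw [LinearMap.map_smul, LinearMap.map_add, LinearMap.map_add, LinearMap.map_smul,
      LinearMap.map_smul, extL_tmul, extL_tmul, extL_tmul,
      br_pe_right, br_c_loopsq S i j p q hij hpq hpi hpj hqi hqj]
    simp
  have ha : extL 𝕜 (PathAlg 𝕜 n) (S.D.br (pv 𝕜 n p q))
      (∑ a : Fin n, S.κ i a j • (pe 𝕜 n j ⊗ₜ[𝕜] (pv 𝕜 n i a * pv 𝕜 n a i))) = 0 := by
    rw [map_sum]
    refine Finset.sum_eq_zero fun a _ => ?_
    rw [LinearMap.map_smul, extL_tmul, br_pe_right]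
    simp
  have hb : tau132 𝕜 (PathAlg 𝕜 n) (extL 𝕜 (PathAlg 𝕜 n) (S.D.br (pv 𝕜 n p q))
      (∑ b : Fin n, S.κ j b i • ((pv 𝕜 n j b * pv 𝕜 n b j) ⊗ₜ[𝕜] pe 𝕜 n i)))
      = S.κ j p i • ( (S.β p q j - S.μ p j q) •
            (pv 𝕜 n p j ⊗ₜ[𝕜] (pe 𝕜 n i ⊗ₜ[𝕜] (pv 𝕜 n j p * pv 𝕜 n p q)))
          - S.ν p j q • (pv 𝕜 n p j ⊗ₜ[𝕜] (pe 𝕜 n i ⊗ₜ[𝕜] pv 𝕜 n j q)) )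
        + S.κ j q i • ( (S.α q p j + S.μ q p j) •
            ((pv 𝕜 n p q * pv 𝕜 n q j) ⊗ₜ[𝕜] (pe 𝕜 n i ⊗ₜ[𝕜] pv 𝕜 n j q))
          + S.ν q p j • (pv 𝕜 n p j ⊗ₜ[𝕜] (pe 𝕜 n i ⊗ₜ[𝕜] pv 𝕜 n j q)) ) := by
    rw [map_sum, map_sum, ← Finset.sum_subset (Finset.subset_univ {p, q})]
    · rw [Finset.sum_pair hpq,
        LinearMap.map_smul, LinearMap.map_smul, map_smul, map_smul,
        extL_tmul, extL_tmul,
        br_c_sq_p S i j p q hpq hpi hpj hqi hqj, br_c_sq_q S i j p q hpq hpi hpj hqi hqj]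
      erw [TensorProduct.sub_tmul ((S.β p q j - S.μ p j q) • ((pv 𝕜 n j p * pv 𝕜 n p q) ⊗ₜ[𝕜] pv 𝕜 n p j))
        (S.ν p j q • (pv 𝕜 n j q ⊗ₜ[𝕜] pv 𝕜 n p j)) (pe 𝕜 n i)]
      simp only [TensorProduct.sub_tmul, TensorProduct.add_tmul, TensorProduct.smul_tmul',
        map_sub, map_add, map_smul,
        TensorProduct.assoc_tmul, tau132_tmul, TensorProduct.tmul_smul]
      simp only [TensorProduct.smul_tmul, TensorProduct.tmul_smul]
    · intro b _ hb
      simp only [Finset.mem_insert, Finset.mem_singleton, not_or] at hb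
      rw [LinearMap.map_smul, extL_tmul, br_c_sq_other S i j p q hpq hpi hpj hqi hqj b hb.1 hb.2]
      simp
  rw [LinearMap.map_sub, LinearMap.map_add, map_sub, map_add,
    hA, ha, hb]
  simp only [map_zero, zero_add, add_zero, zero_sub]
  rw [smul_sub, smul_add, smul_smul, smul_smul, smul_smul, smul_smul]
  rw [mul_sub]
  rw [mul_add]
  module

end Bracket

section QP
variable {𝕜 : Type} [Field 𝕜] [CharZero 𝕜] {n : ℕ}

lemma tripleQP_eq_zero (i j p q : Fin n)
    (hij : i ≠ j) (hpq : p ≠ q) (hpi : p ≠ i) (hpj : p ≠ j) (hqi : q ≠ i) (hqj : q ≠ j) :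
    tripleQP (𝕜 := 𝕜) (pe 𝕜 n) (pv 𝕜 n i j) (pv 𝕜 n j i) (pv 𝕜 n p q) = 0 := by
  unfold tripleQP
  refine Eq.trans (congrArg (fun x : PathAlg 𝕜 n ⊗[𝕜] (PathAlg 𝕜 n ⊗[𝕜] PathAlg 𝕜 n) =>
    (4 : 𝕜)⁻¹ • x) (Finset.sum_eq_zero fun s _ => ?_)) (smul_zero _)
  have z1 : pv 𝕜 n p q * pv 𝕜 n i j = 0 := pv_mul_pv_zero _ _ _ _ hqi
  have z2 : pv 𝕜 n j i * pv 𝕜 n p q = 0 := pv_mul_pv_zero _ _ _ _ hpi.symm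
  rcases eq_or_ne s i with rfl | hsi
  · simp [pe_mul_pv, pv_mul_pe, z1, z2, hij, hij.symm, hpi, hpi.symm, hqi, hqi.symm,
      hpj, hpj.symm, hqj, hqj.symm, hpq, hpq.symm]
  rcases eq_or_ne s j with rfl | hsj
  · simp [pe_mul_pv, pv_mul_pe, z1, z2, hij, hij.symm, hpi, hpi.symm, hqi, hqi.symm,
      hpj, hpj.symm, hqj, hqj.symm, hpq, hpq.symm]
  rcases eq_or_ne s p with rfl | hsp
  · simp [pe_mul_pv, pv_mul_pe, z1, z2, hij, hij.symm, hpi, hpi.symm, hqi, hqi.symm,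
      hpj, hpj.symm, hqj, hqj.symm, hpq, hpq.symm]
  rcases eq_or_ne s q with rfl | hsq
  · simp [pe_mul_pv, pv_mul_pe, z1, z2, hij, hij.symm, hpi, hpi.symm, hqi, hqi.symm,
      hpj, hpj.symm, hqj, hqj.symm, hpq, hpq.symm]
  · simp [pe_mul_pv, pv_mul_pe, hsi, hsi.symm, hsj, hsj.symm, hsp, hsp.symm, hsq, hsq.symm]
end QP

/-- Case 3.1.a, Lemma 5.6. For a triple `(v_{ij}, v_{ji}, v_{pq})`
with `p, q ∉ {i,j}` and `p ≠ q`, the quasi-Poisson property holds iff the condition in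
the applicable case among (i), (ii), (iii) is satisfied. -/
theorem statement_13 {𝕜 : Type} [Field 𝕜] [CharZero 𝕜] {n : ℕ}
    (S : BracketData 𝕜 n) (i j p q : Fin n)
    (hij : i ≠ j) (hpq : p ≠ q) (hpi : p ≠ i) (hpj : p ≠ j) (hqi : q ≠ i) (hqj : q ≠ j) :
    tripleBr S.D (pv 𝕜 n i j) (pv 𝕜 n j i) (pv 𝕜 n p q)
        = tripleQP (pe 𝕜 n) (pv 𝕜 n i j) (pv 𝕜 n j i) (pv 𝕜 n p q)
      ↔ ( ((i < p ∧ p < j ∧ j < q) ∨ (q < i ∧ i < p ∧ p < j) →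
              (S.κ j p i = 0 ∨ (S.μ p j q - S.β p q j = 0 ∧ S.ν p j q = 0)))
        ∧ ((i < q ∧ q < j ∧ j < p) ∨ (p < i ∧ i < q ∧ q < j) →
              (S.κ j q i = 0 ∨ (S.μ q p j + S.α q p j = 0 ∧ S.ν q p j = 0)))
        ∧ (i < p ∧ p < j ∧ i < q ∧ q < j ∧ p ≠ q →
              (S.κ j q i * (S.μ q p j + S.α q p j) = 0
                ∧ S.κ j p i * (S.μ p j q - S.β p q j) = 0
                ∧ S.κ j p i * S.ν p j q - S.κ j q i * S.ν q p j = 0)) ) := by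
  rw [tripleBr_eq S i j p q hij hpq hpi hpj hqi hqj,
    tripleQP_eq_zero i j p q hij hpq hpi hpj hqi hqj]
  have hcomm : S.α q p j + S.μ q p j = S.μ q p j + S.α q p j := add_comm _ _
  constructor
  · intro h
    obtain ⟨h1, h2, h3⟩ := indep3 hij hpq hpi hpj hqi hqj _ _ _ h
    have h3' : S.κ j q i * (S.μ q p j + S.α q p j) = 0 := by
      rw [← hcomm]; exact neg_eq_zero.mp h3
    refine ⟨?_, ?_, ?_⟩
    · rintro (⟨h₁, h₂, h₃⟩ | ⟨h₁, h₂, h₃⟩)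
      · -- i < p < j < q, so q ∉ (i,j)
        have hkq : S.κ j q i = 0 := S.hκ j q i (fun hc => (lt_asymm h₃) hc.2)
        rw [hkq, zero_mul, sub_zero] at h2
        rcases mul_eq_zero.mp h1 with hk | hA
        · exact Or.inl hk
        · rcases mul_eq_zero.mp h2 with hk | hB
          · exact Or.inl hk
          · exact Or.inr ⟨hA, hB⟩
      · have hkq : S.κ j q i = 0 := S.hκ j q i (fun hc => (lt_asymm h₁) hc.1)
        rw [hkq, zero_mul, sub_zero] at h2
        rcases mul_eq_zero.mp h1 with hk | hA
        · exact Or.inl hk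
        · rcases mul_eq_zero.mp h2 with hk | hB
          · exact Or.inl hk
          · exact Or.inr ⟨hA, hB⟩
    · rintro (⟨h₁, h₂, h₃⟩ | ⟨h₁, h₂, h₃⟩)
      · have hkp : S.κ j p i = 0 := S.hκ j p i (fun hc => (lt_asymm h₃) hc.2)
        rw [hkp, zero_mul, zero_sub, neg_eq_zero] at h2
        rcases mul_eq_zero.mp h3' with hk | hA
        · exact Or.inl hk
        · rcases mul_eq_zero.mp h2 with hk | hB
          · exact Or.inl hk
          · exact Or.inr ⟨hA, hB⟩
      · have hkp : S.κ j p i = 0 := S.hκ j p i (fun hc => (lt_asymm h₁) hc.1)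
        rw [hkp, zero_mul, zero_sub, neg_eq_zero] at h2
        rcases mul_eq_zero.mp h3' with hk | hA
        · exact Or.inl hk
        · rcases mul_eq_zero.mp h2 with hk | hB
          · exact Or.inl hk
          · exact Or.inr ⟨hA, hB⟩
    · intro _
      exact ⟨h3', h1, h2⟩
  · rintro ⟨H1, H2, H3⟩
    by_cases hp : i < p ∧ p < j
    · by_cases hq : i < q ∧ q < j
      · obtain ⟨E1, E2, E3⟩ := H3 ⟨hp.1, hp.2, hq.1, hq.2, hpq⟩
        simp [E2, E3, hcomm, E1]
      · have hkq : S.κ j q i = 0 := S.hκ j q i hq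
        have hq' : q < i ∨ j < q := by
          rcases lt_or_gt_of_ne hqi with h | h
          · exact Or.inl h
          · right
            rcases lt_or_gt_of_ne hqj with h2 | h2
            · exact absurd ⟨h, h2⟩ hq
            · exact h2
        have case1 : (i < p ∧ p < j ∧ j < q) ∨ (q < i ∧ i < p ∧ p < j) := by
          rcases hq' with h | h
          · exact Or.inr ⟨h, hp.1, hp.2⟩
          · exact Or.inl ⟨hp.1, hp.2, h⟩
        rcases H1 case1 with hk | ⟨hA, hB⟩
        · simp [hk, hkq]
        · simp [hA, hB, hkq]
    · have hkp : S.κ j p i = 0 := S.hκ j p i hp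
      by_cases hq : i < q ∧ q < j
      · have hp' : p < i ∨ j < p := by
          rcases lt_or_gt_of_ne hpi with h | h
          · exact Or.inl h
          · right
            rcases lt_or_gt_of_ne hpj with h2 | h2
            · exact absurd ⟨h, h2⟩ hp
            · exact h2
        have case2 : (i < q ∧ q < j ∧ j < p) ∨ (p < i ∧ i < q ∧ q < j) := by
          rcases hp' with h | h
          · exact Or.inr ⟨h, hq.1, hq.2⟩
          · exact Or.inl ⟨hq.1, hq.2, h⟩
        rcases H2 case2 with hk | ⟨hA, hB⟩
        · simp [hkp, hk]
        · simp [hkp, hcomm, hA, hB]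
      · have hkq : S.κ j q i = 0 := S.hκ j q i hq
        simp [hkp, hkq]

end NCQP
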